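/- Let A, B be nonempty closed convex subsets of a uniformly convex Banach space X, and T a p-cyclic φ-contraction mapping. Then T has a unique coupled best proximity point, i.e., a unique (x,y) ∈ A × B with ‖x − T(x,y)‖ = dist(A,B) and ‖y − T(y,x)‖ = dist(A,B). -/

import Mathlib

open Filter Topology

/-- `setDist A B = inf {‖a - b‖ : a ∈ A, b ∈ B}`. -/
noncomputable def setDist {X : Type*} [NormedAddCommGroup X] (A B : Set X) : ℝ :=
  sInf {d : ℝ | ∃ a ∈ A, ∃ b ∈ B, d = ‖a - b‖}

/-!
The coupled best proximity points of `T` are the best proximity points in `A × B` of the map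
`(x, y) ↦ (T(x, y), T(y, x))` on `X × X` with the max norm, which is a cyclic φ-contraction between
`A × B` and `B × A` at the same distance. `X × X` is not uniformly convex, but what the argument
needs is property UC, which the pairs `(A, B)` and `(B, A)` have by uniform convexity and which
passes to products. For a cyclic φ-contraction the distances between consecutive points of an orbit
decrease to `dist(A, B)`, since `φ` is strictly increasing; property UC then makes the even part of
the orbit Cauchy, its limit is a best proximity point, and two best proximity points `p, q` each
bound the cross distance `‖p - F q‖` through the other, forcing `p = q`.
-/

open Set Function

section SetDist

variable {E : Type*} [NormedAddCommGroup E] {A B : Set E}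

theorem setDist_le_norm_sub {a b : E} (ha : a ∈ A) (hb : b ∈ B) : setDist A B ≤ ‖a - b‖ :=
  csInf_le ⟨0, by rintro _ ⟨a, -, b, -, rfl⟩; positivity⟩ ⟨a, ha, b, hb, rfl⟩

theorem setDist_nonneg : 0 ≤ setDist A B :=
  Real.sInf_nonneg (by rintro _ ⟨a, -, b, -, rfl⟩; positivity)

theorem le_setDist {c : ℝ} (hA : A.Nonempty) (hB : B.Nonempty)
    (h : ∀ a ∈ A, ∀ b ∈ B, c ≤ ‖a - b‖) : c ≤ setDist A B := by
  obtain ⟨a, ha⟩ := hA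
  obtain ⟨b, hb⟩ := hB
  exact le_csInf ⟨_, a, ha, b, hb, rfl⟩ (by rintro _ ⟨a, ha, b, hb, rfl⟩; exact h a ha b hb)

theorem setDist_comm : setDist A B = setDist B A := by
  unfold setDist
  congr 1
  ext
  constructor <;> rintro ⟨a, ha, b, hb, rfl⟩ <;> exact ⟨b, hb, a, ha, norm_sub_rev _ _⟩

theorem setDist_prod_swap (hA : A.Nonempty) (hB : B.Nonempty) :
    setDist (A ×ˢ B) (B ×ˢ A) = setDist A B := by
  refine le_antisymm (le_setDist hA hB fun a ha b hb => ?_)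
    (le_setDist (hA.prod hB) (hB.prod hA) fun p hp q hq =>
      (setDist_le_norm_sub hp.1 hq.1).trans (norm_fst_le (p - q)))
  calc setDist (A ×ˢ B) (B ×ˢ A) ≤ ‖(a, b) - (b, a)‖ :=
        setDist_le_norm_sub (mk_mem_prod ha hb) (mk_mem_prod hb ha)
    _ = ‖a - b‖ := by simp [Prod.norm_def, norm_sub_rev]

end SetDist

/-- Property UC of Suzuki, Kikkawa and Vetro: points of `A` that are almost nearest to a common
point of `B` are close to each other. -/
def PropertyUC {E : Type*} [NormedAddCommGroup E] (A B : Set E) : Prop :=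
  ∀ ε > 0, ∃ δ > 0, ∀ x ∈ A, ∀ z ∈ A, ∀ y ∈ B,
    ‖x - y‖ ≤ setDist A B + δ → ‖z - y‖ ≤ setDist A B + δ → ‖x - z‖ ≤ ε

section UniformConvex

variable {E : Type*} [NormedAddCommGroup E] [NormedSpace ℝ E]

theorem exists_norm_le_norm_sub_le {u : E} {d δ : ℝ} (hd : 0 ≤ d) (hδ : 0 < δ)
    (hu : ‖u‖ ≤ d + δ) : ∃ u' : E, ‖u'‖ ≤ d ∧ ‖u - u'‖ ≤ δ := by
  have hdδ : 0 < d + δ := by linarith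
  refine ⟨(d / (d + δ)) • u, ?_, ?_⟩
  · rw [norm_smul, Real.norm_of_nonneg (by positivity), div_mul_eq_mul_div, div_le_iff₀ hdδ]
    exact mul_le_mul_of_nonneg_left hu hd
  · have : u - (d / (d + δ)) • u = (δ / (d + δ)) • u := by
      rw [show δ / (d + δ) = 1 - d / (d + δ) by field_simp; ring, sub_smul, one_smul]
    rw [this, norm_smul, Real.norm_of_nonneg (by positivity), div_mul_eq_mul_div, div_le_iff₀ hdδ]
    exact mul_le_mul_of_nonneg_left hu hδ.le

theorem exists_norm_sub_le_of_two_mul_le_norm_add [UniformConvexSpace E] {d ε : ℝ} (hd : 0 ≤ d)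
    (hε : 0 < ε) : ∃ δ > 0, ∀ u v : E, ‖u‖ ≤ d + δ → ‖v‖ ≤ d + δ → 2 * d ≤ ‖u + v‖ →
      ‖u - v‖ ≤ ε := by
  obtain ⟨η, hη, hball⟩ := exists_forall_closed_ball_dist_add_le_two_mul_sub E (half_pos hε) d
  set δ := min (ε / 4) (η / 4)
  have hδε : δ ≤ ε / 4 := min_le_left _ _
  have hδη : δ ≤ η / 4 := min_le_right _ _
  refine ⟨δ, by positivity, fun u v hu hv huv => ?_⟩
  -- Pull `u` and `v` into the closed ball of radius `d`, where uniform convexity applies.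
  obtain ⟨u', hu', huu'⟩ := exists_norm_le_norm_sub_le hd (by positivity) hu
  obtain ⟨v', hv', hvv'⟩ := exists_norm_le_norm_sub_le hd (by positivity) hv
  by_contra! hlt
  have hsub : ‖u - v‖ ≤ ‖u - u'‖ + ‖u' - v'‖ + ‖v - v'‖ := by
    calc ‖u - v‖ = ‖(u - u') + (u' - v') - (v - v')‖ := by congr 1; abel
      _ ≤ ‖(u - u') + (u' - v')‖ + ‖v - v'‖ := norm_sub_le _ _
      _ ≤ ‖u - u'‖ + ‖u' - v'‖ + ‖v - v'‖ := by gcongr; exact norm_add_le _ _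
  have hadd : ‖u + v‖ ≤ ‖u' + v'‖ + ‖u - u'‖ + ‖v - v'‖ := by
    calc ‖u + v‖ = ‖(u' + v') + (u - u') + (v - v')‖ := by congr 1; abel
      _ ≤ _ := norm_add₃_le
  have := hball hu' hv' (by linarith)
  linarith

theorem Convex.propertyUC [UniformConvexSpace E] {A : Set E} (hA : Convex ℝ A) (B : Set E) :
    PropertyUC A B := by
  intro ε hε
  obtain ⟨δ, hδ, h⟩ :=
    exists_norm_sub_le_of_two_mul_le_norm_add (E := E) (setDist_nonneg (A := A) (B := B)) hε
  refine ⟨δ, hδ, fun x hx z hz y hy hxy hzy => ?_⟩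
  have hmid : setDist A B ≤ ‖midpoint ℝ x z - y‖ := setDist_le_norm_sub (hA.midpoint_mem hx hz) hy
  have : x - y + (z - y) = (2 : ℝ) • (midpoint ℝ x z - y) := by
    rw [midpoint_eq_smul_add, invOf_eq_inv]; module
  simpa using h (x - y) (z - y) hxy hzy (by rw [this, norm_smul]; norm_num; linarith)

end UniformConvex

section PropertyUC

variable {E : Type*} [NormedAddCommGroup E] {A B : Set E}

theorem PropertyUC.eq_of_norm_sub_eq (h : PropertyUC A B) {x z y : E} (hx : x ∈ A) (hz : z ∈ A)
    (hy : y ∈ B) (hxy : ‖x - y‖ = setDist A B) (hzy : ‖z - y‖ = setDist A B) : x = z :=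
  eq_of_forall_dist_le fun ε hε => by
    obtain ⟨δ, hδ, hUC⟩ := h ε hε
    rw [dist_eq_norm]
    exact hUC x hx z hz y hy (by linarith) (by linarith)

theorem PropertyUC.tendsto_norm_sub {ι : Type*} {l : Filter ι} (h : PropertyUC A B)
    {x z y : ι → E} (hx : ∀ i, x i ∈ A) (hz : ∀ i, z i ∈ A) (hy : ∀ i, y i ∈ B)
    (hxy : Tendsto (fun i => ‖x i - y i‖) l (𝓝 (setDist A B)))
    (hzy : Tendsto (fun i => ‖z i - y i‖) l (𝓝 (setDist A B))) :
    Tendsto (fun i => ‖x i - z i‖) l (𝓝 0) := by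
  refine tendsto_order.2 ⟨fun a ha => .of_forall fun i => ha.trans_le (norm_nonneg _),
    fun ε hε => ?_⟩
  obtain ⟨δ, hδ, hUC⟩ := h (ε / 2) (half_pos hε)
  filter_upwards [(tendsto_order.1 hxy).2 _ (lt_add_of_pos_right _ hδ),
    (tendsto_order.1 hzy).2 _ (lt_add_of_pos_right _ hδ)] with i hxi hzi
  exact (hUC _ (hx i) _ (hz i) _ (hy i) hxi.le hzi.le).trans_lt (half_lt_self hε)

theorem PropertyUC.prod_swap (hAB : PropertyUC A B) (hBA : PropertyUC B A) (hA : A.Nonempty)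
    (hB : B.Nonempty) : PropertyUC (A ×ˢ B) (B ×ˢ A) := by
  intro ε hε
  obtain ⟨δ₁, hδ₁, h₁⟩ := hAB ε hε
  obtain ⟨δ₂, hδ₂, h₂⟩ := hBA ε hε
  refine ⟨min δ₁ δ₂, lt_min hδ₁ hδ₂, fun p hp r hr q hq hpq hrq => ?_⟩
  rw [setDist_prod_swap hA hB] at hpq hrq
  have hδ₁' : ∀ s : E × E, ‖s‖ ≤ setDist A B + min δ₁ δ₂ → ‖s.1‖ ≤ setDist A B + δ₁ :=
    fun s hs => (norm_fst_le s).trans (hs.trans (by gcongr; exact min_le_left _ _))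
  have hδ₂' : ∀ s : E × E, ‖s‖ ≤ setDist A B + min δ₁ δ₂ → ‖s.2‖ ≤ setDist B A + δ₂ :=
    fun s hs => (norm_snd_le s).trans
      (hs.trans (by rw [setDist_comm]; gcongr; exact min_le_right _ _))
  rw [Prod.norm_def]
  exact max_le (h₁ _ hp.1 _ hr.1 _ hq.1 (hδ₁' _ hpq) (hδ₁' _ hrq))
    (h₂ _ hp.2 _ hr.2 _ hq.2 (hδ₂' _ hpq) (hδ₂' _ hrq))

end PropertyUC

theorem tendsto_of_le_of_le_sub_add {φ : ℝ → ℝ} {D : ℕ → ℝ} {d : ℝ} (hd : 0 ≤ d)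
    (hφ : StrictMonoOn φ (Ici 0)) (hle : ∀ n, d ≤ D n)
    (hstep : ∀ n, D (n + 1) ≤ D n - φ (D n) + φ d) : Tendsto D atTop (𝓝 d) := by
  have hφD : ∀ {c}, 0 ≤ c → ∀ n, c ≤ D n → φ c ≤ φ (D n) := fun hc n hcn =>
    hφ.monotoneOn hc (hc.trans hcn) hcn
  have hanti : Antitone D := antitone_nat_of_succ_le fun n => by
    linarith [hstep n, hφD hd n (hle n)]
  have hbdd : BddBelow (range D) := ⟨d, forall_mem_range.2 hle⟩
  set L := ⨅ n, D n
  have hlim : Tendsto D atTop (𝓝 L) := tendsto_atTop_ciInf hanti hbdd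
  have hdL : d ≤ L := le_ciInf hle
  -- Each step lowers `D` by at least `φ L - φ d`, so this gap must vanish in the limit.
  have hgap : L ≤ L - (φ L - φ d) :=
    le_of_tendsto_of_tendsto' (hlim.comp (tendsto_add_atTop_nat 1)) (hlim.sub_const _) fun n => by
      simp only [comp_apply]
      linarith [hstep n, hφD (hd.trans hdL) n (ciInf_le hbdd n)]
  have hLd : L ≤ d := by
    by_contra! h
    linarith [hφ hd (hd.trans hdL) h]
  rwa [le_antisymm hLd hdL] at hlim

structure IsCyclicPhiContraction {E : Type*} [NormedAddCommGroup E] (φ : ℝ → ℝ) (A B : Set E)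
    (F : E → E) : Prop where
  mapsTo_left : MapsTo F A B
  mapsTo_right : MapsTo F B A
  norm_sub_le : ∀ p ∈ A, ∀ q ∈ B, ‖F p - F q‖ ≤ ‖p - q‖ - φ ‖p - q‖ + φ (setDist A B)

namespace IsCyclicPhiContraction

variable {E : Type*} [NormedAddCommGroup E] {A B : Set E} {F : E → E} {φ : ℝ → ℝ} {p q : E}

theorem symm (hF : IsCyclicPhiContraction φ A B F) : IsCyclicPhiContraction φ B A F where
  mapsTo_left := hF.mapsTo_right
  mapsTo_right := hF.mapsTo_left
  norm_sub_le p hp q hq := by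
    rw [norm_sub_rev, norm_sub_rev p, setDist_comm]
    exact hF.norm_sub_le q hq p hp

theorem norm_apply_sub_apply_le (hF : IsCyclicPhiContraction φ A B F)
    (hφ : MonotoneOn φ (Ici 0)) (hp : p ∈ A) (hq : q ∈ B) : ‖F p - F q‖ ≤ ‖p - q‖ := by
  have hd := setDist_le_norm_sub hp hq
  linarith [hF.norm_sub_le p hp q hq, hφ setDist_nonneg (setDist_nonneg.trans hd) hd]

theorem iterate_two_mul_mem (hF : IsCyclicPhiContraction φ A B F) (hp : p ∈ A) (n : ℕ) :
    F^[2 * n] p ∈ A := by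
  rw [iterate_mul]
  exact (hF.mapsTo_right.comp hF.mapsTo_left).iterate n hp

theorem iterate_two_mul_add_one_mem (hF : IsCyclicPhiContraction φ A B F) (hp : p ∈ A) (n : ℕ) :
    F^[2 * n + 1] p ∈ B := by
  rw [iterate_succ_apply']
  exact hF.mapsTo_left (hF.iterate_two_mul_mem hp n)

theorem iterate_mem_union (hF : IsCyclicPhiContraction φ A B F) (hp : p ∈ A ∪ B) (n : ℕ) :
    F^[n] p ∈ A ∪ B :=
  MapsTo.iterate (fun _ hq => hq.elim (fun hq => .inr (hF.mapsTo_left hq))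
    (fun hq => .inl (hF.mapsTo_right hq))) n hp

theorem le_norm_sub_apply (hF : IsCyclicPhiContraction φ A B F) (hp : p ∈ A ∪ B) :
    setDist A B ≤ ‖p - F p‖ := by
  rcases hp with hp | hp
  · exact setDist_le_norm_sub hp (hF.mapsTo_left hp)
  · rw [norm_sub_rev]
    exact setDist_le_norm_sub (hF.mapsTo_right hp) hp

theorem norm_apply_sub_apply_apply_le (hF : IsCyclicPhiContraction φ A B F) (hp : p ∈ A ∪ B) :
    ‖F p - F (F p)‖ ≤ ‖p - F p‖ - φ ‖p - F p‖ + φ (setDist A B) := by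
  rcases hp with hp | hp
  · exact hF.norm_sub_le p hp (F p) (hF.mapsTo_left hp)
  · rw [setDist_comm]
    exact hF.symm.norm_sub_le p hp (F p) (hF.mapsTo_right hp)

theorem tendsto_norm_iterate_sub_iterate_succ (hF : IsCyclicPhiContraction φ A B F)
    (hφ : StrictMonoOn φ (Ici 0)) (hp : p ∈ A ∪ B) :
    Tendsto (fun n => ‖F^[n] p - F^[n + 1] p‖) atTop (𝓝 (setDist A B)) :=
  tendsto_of_le_of_le_sub_add setDist_nonneg hφ
    (fun n => by
      simpa only [iterate_succ_apply'] using hF.le_norm_sub_apply (hF.iterate_mem_union hp n))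
    (fun n => by simpa only [iterate_succ_apply'] using
      hF.norm_apply_sub_apply_apply_le (hF.iterate_mem_union hp n))

theorem tendsto_norm_iterate_two_mul_sub (hF : IsCyclicPhiContraction φ A B F)
    (hφ : StrictMonoOn φ (Ici 0)) (hAB : PropertyUC A B) (hp : p ∈ A) :
    Tendsto (fun n => ‖F^[2 * n] p - F^[2 * n + 2] p‖) atTop (𝓝 0) := by
  have hD := hF.tendsto_norm_iterate_sub_iterate_succ hφ (.inl hp)
  have h2 : Tendsto (fun n : ℕ => 2 * n) atTop atTop :=
    (strictMono_mul_left_of_pos two_pos).tendsto_atTop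
  exact hAB.tendsto_norm_sub (hF.iterate_two_mul_mem hp) (y := fun n => F^[2 * n + 1] p)
    (fun n => hF.iterate_two_mul_mem hp (n + 1)) (hF.iterate_two_mul_add_one_mem hp)
    (hD.comp h2) ((hD.comp ((tendsto_add_atTop_nat 1).comp h2)).congr fun n => norm_sub_rev _ _)

theorem exists_forall_norm_iterate_sub_le (hF : IsCyclicPhiContraction φ A B F)
    (hφ : StrictMonoOn φ (Ici 0)) (hAB : PropertyUC A B) (hBA : PropertyUC B A) (hp : p ∈ A)
    {ε : ℝ} (hε : 0 < ε) :
    ∃ N, ∀ m ≥ N, ∀ n ≥ N, ‖F^[2 * m] p - F^[2 * n + 1] p‖ ≤ setDist A B + ε := by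
  set d := setDist A B
  have hd : 0 ≤ d := setDist_nonneg
  obtain ⟨η, hη, hηφ⟩ : ∃ η > 0, 2 * η < φ (d + ε) - φ d := by
    have := hφ hd (by simp; linarith) (lt_add_of_pos_right d hε)
    exact ⟨(φ (d + ε) - φ d) / 3, by linarith, by linarith⟩
  have hodd : Tendsto (fun n => ‖F^[2 * n + 1] p - F^[2 * n + 3] p‖) atTop (𝓝 0) := by
    simpa only [← iterate_succ_apply] using
      hF.symm.tendsto_norm_iterate_two_mul_sub hφ hBA (hF.mapsTo_left hp)
  obtain ⟨N₁, h₁⟩ := eventually_atTop.1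
    ((tendsto_order.1 (hF.tendsto_norm_iterate_two_mul_sub hφ hAB hp)).2 η hη)
  obtain ⟨N₂, h₂⟩ := eventually_atTop.1 ((tendsto_order.1 hodd).2 η hη)
  refine ⟨max N₁ N₂, fun m hm n hn => ?_⟩
  set a := ‖F^[2 * m] p - F^[2 * n + 1] p‖
  -- Two steps of `F` would shrink `a > d + ε` by at least `φ (d + ε) - φ d`, more than the
  -- two short gaps between the even and between the odd points can make up for.
  by_contra! hlt
  have hstep : ‖F^[2 * m + 2] p - F^[2 * n + 3] p‖ ≤ a - φ a + φ d :=
    calc ‖F^[2 * m + 2] p - F^[2 * n + 3] p‖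
        = ‖F (F^[2 * m + 1] p) - F (F^[2 * n + 2] p)‖ := by simp only [iterate_succ_apply']
      _ ≤ ‖F^[2 * m + 1] p - F^[2 * n + 2] p‖ :=
        hF.symm.norm_apply_sub_apply_le hφ.monotoneOn (hF.iterate_two_mul_add_one_mem hp m)
          (hF.iterate_two_mul_mem hp (n + 1))
      _ = ‖F (F^[2 * m] p) - F (F^[2 * n + 1] p)‖ := by simp only [iterate_succ_apply']
      _ ≤ a - φ a + φ d := hF.norm_sub_le _ (hF.iterate_two_mul_mem hp m) _
        (hF.iterate_two_mul_add_one_mem hp n)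
  have htri : a ≤ ‖F^[2 * m] p - F^[2 * m + 2] p‖ + ‖F^[2 * m + 2] p - F^[2 * n + 3] p‖
      + ‖F^[2 * n + 1] p - F^[2 * n + 3] p‖ := by
    rw [norm_sub_rev (F^[2 * n + 1] p)]
    exact (norm_sub_le_norm_sub_add_norm_sub _ _ _).trans
      (by gcongr; exact norm_sub_le_norm_sub_add_norm_sub _ _ _)
  have hφa : φ (d + ε) ≤ φ a := hφ.monotoneOn (by simp; linarith) (by simp; linarith) hlt.le
  linarith [h₁ m (le_of_max_le_left hm), h₂ n (le_of_max_le_right hn)]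

theorem cauchySeq_iterate_two_mul (hF : IsCyclicPhiContraction φ A B F)
    (hφ : StrictMonoOn φ (Ici 0)) (hAB : PropertyUC A B) (hBA : PropertyUC B A) (hp : p ∈ A) :
    CauchySeq fun n => F^[2 * n] p := by
  refine Metric.cauchySeq_iff'.2 fun ε hε => ?_
  obtain ⟨δ, hδ, hUC⟩ := hAB (ε / 2) (half_pos hε)
  obtain ⟨N, hN⟩ := hF.exists_forall_norm_iterate_sub_le hφ hAB hBA hp hδ
  refine ⟨N, fun n hn => ?_⟩
  rw [dist_eq_norm]
  exact (hUC _ (hF.iterate_two_mul_mem hp n) _ (hF.iterate_two_mul_mem hp N) _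
    (hF.iterate_two_mul_add_one_mem hp N) (hN n hn N le_rfl) (hN N le_rfl N le_rfl)).trans_lt
    (half_lt_self hε)

theorem norm_sub_apply_eq_of_tendsto {ι : Type*} {l : Filter ι} [l.NeBot]
    (hF : IsCyclicPhiContraction φ A B F) (hφ : MonotoneOn φ (Ici 0)) {u : ι → E} {z : E}
    (hz : z ∈ A) (hu : Tendsto u l (𝓝 z)) (hFFu : Tendsto (fun i => F (F (u i))) l (𝓝 z))
    (hd : Tendsto (fun i => ‖u i - F (u i)‖) l (𝓝 (setDist A B))) (huA : ∀ i, u i ∈ A) :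
    ‖z - F z‖ = setDist A B := by
  have hbound : Tendsto (fun i => ‖F (F (u i)) - z‖ + (‖u i - F (u i)‖ + ‖u i - z‖)) l
      (𝓝 (setDist A B)) := by
    simpa using (tendsto_iff_norm_sub_tendsto_zero.1 hFFu).add
      (hd.add (tendsto_iff_norm_sub_tendsto_zero.1 hu))
  refine le_antisymm (ge_of_tendsto hbound (.of_forall fun i => ?_))
    (setDist_le_norm_sub hz (hF.mapsTo_left hz))
  calc ‖z - F z‖ ≤ ‖F (F (u i)) - z‖ + ‖F (F (u i)) - F z‖ := by
        rw [norm_sub_rev (F (F _))]; exact norm_sub_le_norm_sub_add_norm_sub _ _ _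
    _ ≤ ‖F (F (u i)) - z‖ + (‖u i - F (u i)‖ + ‖u i - z‖) := by
        gcongr
        refine (hF.symm.norm_apply_sub_apply_le hφ (hF.mapsTo_left (huA i)) hz).trans ?_
        rw [norm_sub_rev (u i) (F (u i))]
        exact norm_sub_le_norm_sub_add_norm_sub _ _ _

theorem apply_apply_eq_of_norm_sub_apply_eq (hF : IsCyclicPhiContraction φ A B F)
    (hφ : MonotoneOn φ (Ici 0)) (hAB : PropertyUC A B) (hp : p ∈ A)
    (hpd : ‖p - F p‖ = setDist A B) : F (F p) = p := by
  have hFp := hF.mapsTo_left hp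
  refine hAB.eq_of_norm_sub_eq (hF.mapsTo_right hFp) hp hFp (le_antisymm ?_ ?_) hpd
  · rw [norm_sub_rev, ← hpd]
    exact hF.norm_apply_sub_apply_le hφ hp hFp
  · exact setDist_le_norm_sub (hF.mapsTo_right hFp) hFp

theorem eq_of_norm_sub_apply_eq (hF : IsCyclicPhiContraction φ A B F)
    (hφ : StrictMonoOn φ (Ici 0)) (hAB : PropertyUC A B) (hp : p ∈ A) (hq : q ∈ A)
    (hpd : ‖p - F p‖ = setDist A B) (hqd : ‖q - F q‖ = setDist A B) : p = q := by
  set d := setDist A B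
  have hcross : ∀ {p q}, p ∈ A → q ∈ A → ‖p - F p‖ = d →
      ‖p - F q‖ ≤ ‖q - F p‖ - φ ‖q - F p‖ + φ d := fun {p q} hp hq hpd =>
    calc ‖p - F q‖ = ‖F q - F (F p)‖ := by
          rw [hF.apply_apply_eq_of_norm_sub_apply_eq hφ.monotoneOn hAB hp hpd, norm_sub_rev]
      _ ≤ _ := hF.norm_sub_le q hq (F p) (hF.mapsTo_left hp)
  have hqFp : d ≤ ‖q - F p‖ := setDist_le_norm_sub hq (hF.mapsTo_left hp)
  -- The two cross distances each lower the other, which forces both down to `d`.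
  have hM : ‖p - F q‖ = d := by
    refine le_antisymm ?_ (setDist_le_norm_sub hp (hF.mapsTo_left hq))
    by_contra! hlt
    linarith [hcross hp hq hpd, hcross hq hp hqd,
      hφ.monotoneOn setDist_nonneg (setDist_nonneg.trans hqFp) hqFp,
      hφ setDist_nonneg (setDist_nonneg.trans hlt.le) hlt]
  exact hAB.eq_of_norm_sub_eq hp hq (hF.mapsTo_left hq) hM hqd

theorem existsUnique_norm_sub_apply_eq_setDist [CompleteSpace E]
    (hF : IsCyclicPhiContraction φ A B F) (hφ : StrictMonoOn φ (Ici 0)) (hAB : PropertyUC A B)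
    (hBA : PropertyUC B A) (hAcl : IsClosed A) (hA : A.Nonempty) :
    ∃! p, p ∈ A ∧ ‖p - F p‖ = setDist A B := by
  obtain ⟨p, hp⟩ := hA
  obtain ⟨z, hz⟩ := cauchySeq_tendsto_of_complete (hF.cauchySeq_iterate_two_mul hφ hAB hBA hp)
  have hzA : z ∈ A := hAcl.mem_of_tendsto hz (.of_forall (hF.iterate_two_mul_mem hp))
  have hFFz : Tendsto (fun n => F (F (F^[2 * n] p))) atTop (𝓝 z) :=
    (hz.comp (tendsto_add_atTop_nat 1)).congr fun n => by
      simp only [comp_apply, mul_add, iterate_succ_apply']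
  have hd := (hF.tendsto_norm_iterate_sub_iterate_succ hφ (.inl hp)).comp
    (strictMono_mul_left_of_pos two_pos).tendsto_atTop
  have hzd : ‖z - F z‖ = setDist A B :=
    hF.norm_sub_apply_eq_of_tendsto hφ.monotoneOn hzA hz hFFz
      (hd.congr fun n => by simp only [comp_apply, iterate_succ_apply'])
      (hF.iterate_two_mul_mem hp)
  exact ⟨z, ⟨hzA, hzd⟩, fun q ⟨hq, hqd⟩ => hF.eq_of_norm_sub_apply_eq hφ hAB hq hzA hqd hzd⟩

end IsCyclicPhiContraction

section Coupled

variable {E : Type*} [NormedAddCommGroup E] {A B : Set E} {T : E → E → E}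

def coupledMap (T : E → E → E) (p : E × E) : E × E := (T p.1 p.2, T p.2 p.1)

theorem isCyclicPhiContraction_coupledMap {φ : ℝ → ℝ} (hA : A.Nonempty) (hB : B.Nonempty)
    (hTB : ∀ x ∈ A, ∀ y ∈ B, T x y ∈ B) (hTA : ∀ x ∈ B, ∀ y ∈ A, T x y ∈ A)
    (hT : ∀ x₁ ∈ A, ∀ y₁ ∈ B, ∀ x₂ ∈ B, ∀ y₂ ∈ A,
      ‖T x₁ y₁ - T x₂ y₂‖ ≤ ‖((x₁, y₁) : E × E) - (x₂, y₂)‖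
        - φ ‖((x₁, y₁) : E × E) - (x₂, y₂)‖ + φ (setDist A B)) :
    IsCyclicPhiContraction φ (A ×ˢ B) (B ×ˢ A) (coupledMap T) where
  mapsTo_left p hp := ⟨hTB _ hp.1 _ hp.2, hTA _ hp.2 _ hp.1⟩
  mapsTo_right p hp := ⟨hTA _ hp.1 _ hp.2, hTB _ hp.2 _ hp.1⟩
  norm_sub_le p hp q hq := by
    have hswap : ‖((q.2, q.1) : E × E) - (p.2, p.1)‖ = ‖p - q‖ := by
      simp only [Prod.norm_def, Prod.fst_sub, Prod.snd_sub, norm_sub_rev, max_comm]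
    rw [setDist_prod_swap hA hB, Prod.norm_def]
    refine max_le (hT _ hp.1 _ hp.2 _ hq.1 _ hq.2) ?_
    rw [← hswap]
    exact (norm_sub_rev _ _).trans_le (hT _ hq.2 _ hq.1 _ hp.2 _ hp.1)

theorem norm_sub_coupledMap_eq_setDist_iff (hA : A.Nonempty) (hB : B.Nonempty)
    (hTB : ∀ x ∈ A, ∀ y ∈ B, T x y ∈ B) (hTA : ∀ x ∈ B, ∀ y ∈ A, T x y ∈ A) {p : E × E}
    (hp : p ∈ A ×ˢ B) :
    ‖p - coupledMap T p‖ = setDist (A ×ˢ B) (B ×ˢ A) ↔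
      ‖p.1 - T p.1 p.2‖ = setDist A B ∧ ‖p.2 - T p.2 p.1‖ = setDist A B := by
  have h₁ : setDist A B ≤ ‖p.1 - T p.1 p.2‖ := setDist_le_norm_sub hp.1 (hTB _ hp.1 _ hp.2)
  have h₂ : setDist A B ≤ ‖p.2 - T p.2 p.1‖ := by
    rw [norm_sub_rev]; exact setDist_le_norm_sub (hTA _ hp.2 _ hp.1) hp.2
  rw [setDist_prod_swap hA hB, Prod.norm_def]
  refine ⟨fun h => ⟨le_antisymm (h ▸ le_max_left _ _) h₁, le_antisymm (h ▸ le_max_right _ _) h₂⟩,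
    fun ⟨e₁, e₂⟩ => ?_⟩
  simp only [coupledMap, Prod.fst_sub, Prod.snd_sub, e₁, e₂, max_self]

end Coupled

theorem stmt10_general {X : Type*} [NormedAddCommGroup X] [NormedSpace ℝ X] [UniformConvexSpace X] [CompleteSpace X]
    (A B : Set X) (hA : A.Nonempty) (hB : B.Nonempty)
    (T : X → X → X) (φ : ℝ → ℝ)
    (hφmono : StrictMonoOn φ (Set.Ici 0))
    (hTB : ∀ x ∈ A, ∀ y ∈ B, T x y ∈ B)
    (hTA : ∀ x ∈ B, ∀ y ∈ A, T x y ∈ A)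
    (hT : ∀ x₁ ∈ A, ∀ y₁ ∈ B, ∀ x₂ ∈ B, ∀ y₂ ∈ A,
      ‖T x₁ y₁ - T x₂ y₂‖ ≤ ‖((x₁, y₁) : X × X) - (x₂, y₂)‖
        - φ ‖((x₁, y₁) : X × X) - (x₂, y₂)‖ + φ (setDist A B))
    (hAcl : IsClosed A) (hBcl : IsClosed B) (hAconv : Convex ℝ A) (hBconv : Convex ℝ B) :
    ∃! p : X × X, p.1 ∈ A ∧ p.2 ∈ B ∧
      ‖p.1 - T p.1 p.2‖ = setDist A B ∧ ‖p.2 - T p.2 p.1‖ = setDist A B := by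
  have hAB := hAconv.propertyUC B
  have hBA := hBconv.propertyUC A
  have hF := isCyclicPhiContraction_coupledMap hA hB hTB hTA hT
  have key := hF.existsUnique_norm_sub_apply_eq_setDist hφmono (hAB.prod_swap hBA hA hB)
    (hBA.prod_swap hAB hB hA) (hAcl.prod hBcl) (hA.prod hB)
  refine (existsUnique_congr fun p => ?_).1 key
  rw [← and_assoc, ← mem_prod]
  exact and_congr_right (norm_sub_coupledMap_eq_setDist_iff hA hB hTB hTA)

theorem stmt10 {X : Type*} [NormedAddCommGroup X] [NormedSpace ℝ X] [UniformConvexSpace X] [CompleteSpace X]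
    (A B : Set X) (hA : A.Nonempty) (hB : B.Nonempty)
    (T : X → X → X) (φ : ℝ → ℝ)
    (hφmono : StrictMonoOn φ (Set.Ici 0)) (hφpos : ∀ t ≥ (0:ℝ), 0 ≤ φ t)
    (hTB : ∀ x ∈ A, ∀ y ∈ B, T x y ∈ B)
    (hTA : ∀ x ∈ B, ∀ y ∈ A, T x y ∈ A)
    (hT : ∀ x₁ ∈ A, ∀ y₁ ∈ B, ∀ x₂ ∈ B, ∀ y₂ ∈ A,
      ‖T x₁ y₁ - T x₂ y₂‖ ≤ ‖((x₁, y₁) : X × X) - (x₂, y₂)‖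
        - φ ‖((x₁, y₁) : X × X) - (x₂, y₂)‖ + φ (setDist A B))
    (hAcl : IsClosed A) (hBcl : IsClosed B) (hAconv : Convex ℝ A) (hBconv : Convex ℝ B) :
    ∃! p : X × X, p.1 ∈ A ∧ p.2 ∈ B ∧
      ‖p.1 - T p.1 p.2‖ = setDist A B ∧ ‖p.2 - T p.2 p.1‖ = setDist A B :=
  stmt10_general A B hA hB T φ hφmono hTB hTA hT hAcl hBcl hAconv hBconv
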